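/- arXiv:2601.13209 — 6 statements merged into one kernel-verified Lean document; each statement's English description precedes it below -/
import Mathlib

section
/- The series Σ_{k=1}^∞ a_k T_{p_k,q_k}(x) converges uniformly on ℝ, and its sum f is a continuous function on ℝ with period 2π. -/
open Finset Real Filter

/-- The trigonometric polynomial `T_{p,q}(x) = Σ_{m=1}^p cos((q−m)x)/m − Σ_{m=1}^p cos((q+m)x)/m`. -/
noncomputable def T (p q : ℕ) (x : ℝ) : ℝ :=
  (∑ m ∈ Finset.Icc 1 p, Real.cos (((q : ℝ) - (m : ℝ)) * x) / (m : ℝ))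
    - ∑ m ∈ Finset.Icc 1 p, Real.cos (((q : ℝ) + (m : ℝ)) * x) / (m : ℝ)


/-! By the product formula `2 sin a sin b = cos (a - b) - cos (a + b)`,
`T_{p,q}(x) = 2 sin (q x) · Σ_{m=1}^p sin (m x) / m`, and the partial sums of `Σ sin (m x) / m`
are bounded by `1 + 2π` uniformly in `p` and `x`. By oddness and periodicity it suffices to take
`0 < x ≤ π`; split at `N = ⌊1/x⌋`: each of the first `N` terms is at most `x`, and since
`|Σ_{i<n} sin (i x)| ≤ 1 / sin (x/2) ≤ π / x`, Abel summation bounds the remaining ones by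
`2 / (N + 1) · π / x ≤ 2π`. Hence `|a_k T_{p_k,q_k}| ≤ 2 (1 + 2π) |a_k|`, and the Weierstrass
M-test gives uniform convergence; continuity and `2π`-periodicity pass to the limit. -/

noncomputable def sinSum (n : ℕ) (x : ℝ) : ℝ :=
  ∑ m ∈ Icc 1 n, sin (m * x) / m

lemma T_eq_two_mul_sin_mul_sinSum (p q : ℕ) (x : ℝ) :
    T p q x = 2 * sin (q * x) * sinSum p x := by
  rw [T, sinSum, mul_sum, ← sum_sub_distrib]
  refine sum_congr rfl fun m _ => ?_
  rw [div_sub_div_same, mul_div_assoc', two_mul_sin_mul_sin, sub_mul, add_mul]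

lemma two_mul_sin_half_mul_sum_range_sin (x : ℝ) (n : ℕ) :
    2 * sin (x / 2) * ∑ i ∈ range n, sin (i * x) = cos (x / 2) - cos ((n - 1 / 2) * x) := by
  induction n with
  | zero => simp [div_eq_inv_mul]
  | succ n ih =>
    rw [sum_range_succ, mul_add, ih, two_mul_sin_mul_sin,
      show x / 2 - n * x = -((n - 1 / 2) * x) by ring, cos_neg]
    push_cast
    ring_nf

lemma abs_sum_range_sin_le {x : ℝ} (hx : 0 < sin (x / 2)) (n : ℕ) :
    |∑ i ∈ range n, sin (i * x)| ≤ (sin (x / 2))⁻¹ := by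
  have h := two_mul_sin_half_mul_sum_range_sin x n
  have hcos : |cos (x / 2) - cos ((n - 1 / 2) * x)| ≤ 2 := by
    rw [abs_le]
    constructor <;> linarith [neg_one_le_cos (x / 2), cos_le_one (x / 2),
      neg_one_le_cos ((n - 1 / 2) * x), cos_le_one ((n - 1 / 2) * x)]
  rw [← h, abs_mul, abs_mul, abs_two, abs_of_pos hx] at hcos
  rw [← one_div, le_div_iff₀ hx]
  linarith

lemma abs_sum_Ioc_mul_le {f g : ℕ → ℝ} {M : ℝ} {m n : ℕ} (hmn : m < n)
    (hf : AntitoneOn f (Set.Ioi m)) (hf0 : 0 ≤ f n) (hg : ∀ k, |∑ i ∈ range k, g i| ≤ M) :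
    |∑ i ∈ Ioc m n, f i * g i| ≤ 2 * f (m + 1) * M := by
  have hby := sum_Ioc_by_parts f g hmn
  simp only [smul_eq_mul] at hby
  have hfn : f n ≤ f (m + 1) := hf (Set.mem_Ioi.2 (by omega)) (Set.mem_Ioi.2 hmn) (by omega)
  have htele : ∑ i ∈ Ioc m (n - 1), (f i - f (i + 1)) = f (m + 1) - f n := by
    rw [← Ico_add_one_add_one_eq_Ioc, Nat.sub_add_cancel (by omega), ← neg_sub,
      ← sum_Ico_sub f (by omega), ← sum_neg_distrib]
    simp only [neg_sub]
  have hC : |∑ i ∈ Ioc m (n - 1), (f (i + 1) - f i) * ∑ j ∈ range (i + 1), g j|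
      ≤ (f (m + 1) - f n) * M := by
    rw [← htele, sum_mul]
    refine (abs_sum_le_sum_abs _ _).trans (sum_le_sum fun i hi => ?_)
    have hi := mem_Ioc.1 hi
    have hdec : f (i + 1) ≤ f i := hf (Set.mem_Ioi.2 (by omega)) (Set.mem_Ioi.2 (by omega)) (by omega)
    rw [abs_mul, abs_of_nonpos (by linarith), neg_sub]
    exact mul_le_mul_of_nonneg_left (hg _) (by linarith)
  have hM : 0 ≤ M := (abs_nonneg _).trans (hg 0)
  have hA : |f n * ∑ j ∈ range (n + 1), g j| ≤ f n * M := by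
    rw [abs_mul, abs_of_nonneg hf0]; exact mul_le_mul_of_nonneg_left (hg _) hf0
  have hB : |f (m + 1) * ∑ j ∈ range (m + 1), g j| ≤ f (m + 1) * M := by
    rw [abs_mul, abs_of_nonneg (hf0.trans hfn)]
    exact mul_le_mul_of_nonneg_left (hg _) (hf0.trans hfn)
  rw [hby]
  calc _ ≤ |f n * ∑ j ∈ range (n + 1), g j| + |f (m + 1) * ∑ j ∈ range (m + 1), g j|
        + |∑ i ∈ Ioc m (n - 1), (f (i + 1) - f i) * ∑ j ∈ range (i + 1), g j| :=
        (abs_sub _ _).trans (add_le_add_left (abs_sub _ _) _)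
    _ ≤ f n * M + f (m + 1) * M + (f (m + 1) - f n) * M := by gcongr
    _ = 2 * f (m + 1) * M := by ring

lemma abs_sinSum_le_mul_abs (n : ℕ) (x : ℝ) : |sinSum n x| ≤ n * |x| :=
  calc |sinSum n x| ≤ ∑ m ∈ Icc 1 n, |sin (m * x) / m| := abs_sum_le_sum_abs _ _
    _ ≤ ∑ _m ∈ Icc 1 n, |x| := sum_le_sum fun m hm => by
        have hm : (0 : ℝ) < m := Nat.cast_pos.2 (mem_Icc.1 hm).1
        rw [abs_div, Nat.abs_cast, div_le_iff₀ hm]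
        calc |sin (m * x)| ≤ |m * x| := abs_sin_le_abs
          _ = |x| * m := by rw [abs_mul, Nat.abs_cast, mul_comm]
    _ = n * |x| := by simp

lemma sinSum_add_sum_Ioc {N n : ℕ} (hNn : N ≤ n) (x : ℝ) :
    sinSum N x + ∑ i ∈ Ioc N n, (i : ℝ)⁻¹ * sin (i * x) = sinSum n x := by
  have hIcc (k : ℕ) : Icc 1 k = Ioc 0 k := Icc_add_one_left_eq_Ioc 0 k
  simp only [sinSum, hIcc, inv_mul_eq_div]
  exact sum_Ioc_consecutive _ N.zero_le hNn

lemma abs_sinSum_le_of_pos_of_le_pi {x : ℝ} (hx : 0 < x) (hxπ : x ≤ π) (n : ℕ) :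
    |sinSum n x| ≤ 1 + 2 * π := by
  set N := ⌊x⁻¹⌋₊
  have hNx : N * x ≤ 1 :=
    calc N * x ≤ x⁻¹ * x := by gcongr; exact Nat.floor_le (by positivity)
      _ = 1 := inv_mul_cancel₀ hx.ne'
  have hN : (((N + 1 : ℕ) : ℝ))⁻¹ ≤ x := by
    rw [inv_le_comm₀ (by positivity) hx]
    exact_mod_cast (Nat.lt_floor_add_one _).le
  have hsin : x / π ≤ sin (x / 2) := by
    have := mul_le_sin (x := x / 2) (by positivity) (by linarith)
    convert this using 1
    field_simp
  have hs : 0 < sin (x / 2) := lt_of_lt_of_le (by positivity) hsin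
  rcases le_or_gt n N with hnN | hNn
  · calc |sinSum n x| ≤ n * |x| := abs_sinSum_le_mul_abs n x
      _ ≤ N * x := by rw [abs_of_pos hx]; gcongr
      _ ≤ 1 + 2 * π := by linarith [pi_pos]
  · have hanti : AntitoneOn (fun i : ℕ => (i : ℝ)⁻¹) (Set.Ioi N) := fun i hi j _ hij =>
      inv_anti₀ (Nat.cast_pos.2 (N.zero_le.trans_lt hi)) (by exact_mod_cast hij)
    have htail := abs_sum_Ioc_mul_le hNn hanti (by positivity) (abs_sum_range_sin_le hs)
    have hinv : (sin (x / 2))⁻¹ ≤ π / x :=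
      calc (sin (x / 2))⁻¹ ≤ (x / π)⁻¹ := inv_anti₀ (by positivity) hsin
        _ = π / x := inv_div _ _
    rw [← sinSum_add_sum_Ioc hNn.le]
    calc _ ≤ |sinSum N x| + |∑ i ∈ Ioc N n, (i : ℝ)⁻¹ * sin (i * x)| := abs_add_le _ _
      _ ≤ N * x + 2 * x * (π / x) := by
        gcongr
        · simpa [abs_of_pos hx] using abs_sinSum_le_mul_abs N x
        · exact htail.trans (by gcongr)
      _ ≤ 1 + 2 * π := by
        rw [mul_assoc, mul_div_cancel₀ _ hx.ne']
        linarith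

lemma sinSum_periodic (n : ℕ) : Function.Periodic (sinSum n) (2 * π) := fun x =>
  sum_congr rfl fun m _ => by rw [mul_add, sin_add_nat_mul_two_pi]

lemma sinSum_neg (n : ℕ) (x : ℝ) : sinSum n (-x) = -sinSum n x := by
  simp [sinSum, neg_div, sum_neg_distrib]

lemma abs_sinSum_le (n : ℕ) (x : ℝ) : |sinSum n x| ≤ 1 + 2 * π := by
  obtain ⟨y, ⟨hy₁, hy₂⟩, hxy⟩ := (sinSum_periodic n).exists_mem_Ioc two_pi_pos x (-π)
  rw [hxy]
  rcases lt_trichotomy y 0 with hy | rfl | hy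
  · rw [← neg_neg y, sinSum_neg, abs_neg]
    exact abs_sinSum_le_of_pos_of_le_pi (by linarith) (by linarith) n
  · rw [show sinSum n 0 = 0 by simp [sinSum], abs_zero]
    positivity
  · exact abs_sinSum_le_of_pos_of_le_pi hy (by linarith) n

lemma abs_T_le (p q : ℕ) (x : ℝ) : |T p q x| ≤ 2 * (1 + 2 * π) := by
  rw [T_eq_two_mul_sin_mul_sinSum, abs_mul, abs_mul, abs_two]
  calc 2 * |sin (q * x)| * |sinSum p x| ≤ 2 * 1 * (1 + 2 * π) := by
        gcongr
        exacts [abs_sin_le_one _, abs_sinSum_le p x]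
    _ = 2 * (1 + 2 * π) := by ring

lemma continuous_T (p q : ℕ) : Continuous (T p q) := by
  unfold T
  fun_prop

lemma T_periodic (p q : ℕ) : Function.Periodic (T p q) (2 * π) := fun x => by
  rw [T_eq_two_mul_sin_mul_sinSum, T_eq_two_mul_sin_mul_sinSum, sinSum_periodic, mul_add,
    sin_add_nat_mul_two_pi]

theorem stmt_0_general (p q : ℕ → ℕ) (a : ℕ → ℝ)
    (hsum : Summable a) :
    TendstoUniformly
        (fun (N : ℕ) (x : ℝ) => ∑ k ∈ Finset.range N, a k * T (p k) (q k) x)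
        (fun x => ∑' k, a k * T (p k) (q k) x) Filter.atTop
      ∧ Continuous (fun x => ∑' k, a k * T (p k) (q k) x)
      ∧ ∀ x : ℝ, (∑' k, a k * T (p k) (q k) (x + 2 * Real.pi))
          = ∑' k, a k * T (p k) (q k) x := by
  have hbound (k : ℕ) (x : ℝ) : ‖a k * T (p k) (q k) x‖ ≤ |a k| * (2 * (1 + 2 * π)) := by
    rw [norm_mul, Real.norm_eq_abs, Real.norm_eq_abs]
    exact mul_le_mul_of_nonneg_left (abs_T_le _ _ _) (abs_nonneg _)
  have hunif := tendstoUniformly_tsum_nat (hsum.abs.mul_right _) hbound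
  refine ⟨hunif, hunif.continuous (Frequently.of_forall fun N => ?_), fun x => ?_⟩
  · exact continuous_finsetSum _ fun k _ => continuous_const.mul (continuous_T _ _)
  · exact tsum_congr fun k => congrArg (a k * ·) (T_periodic _ _ x)

/-- The series `Σ_k a_k T_{p_k,q_k}(x)` converges uniformly on `ℝ`, and its sum `f`
is continuous on `ℝ` with period `2π`. -/
theorem stmt_0 (p q : ℕ → ℕ) (a : ℕ → ℝ)
    (hpq : ∀ k, 1 < p k ∧ p k < q k)
    (hsep : ∀ k, q k + p k < q (k + 1) - p (k + 1))
    (hapos : ∀ k, 0 < a k)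
    (hsum : Summable a)
    (hliminf : 0 < Filter.liminf (fun k => a k * Real.log (p k)) Filter.atTop) :
    TendstoUniformly
        (fun (N : ℕ) (x : ℝ) => ∑ k ∈ Finset.range N, a k * T (p k) (q k) x)
        (fun x => ∑' k, a k * T (p k) (q k) x) Filter.atTop
      ∧ Continuous (fun x => ∑' k, a k * T (p k) (q k) x)
      ∧ ∀ x : ℝ, (∑' k, a k * T (p k) (q k) (x + 2 * Real.pi))
          = ∑' k, a k * T (p k) (q k) x :=
  stmt_0_general p q a hsum
end

section
/- For every integer r with 0 ≤ r ≤ n and all matrices A, B ∈ M_n(ℝ) with rank(A) = rank(B) = r, one has rank(φ(A)) = rank(φ(B)). -/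
/-!
Matrices of equal rank are equivalent: `B = P * A * Q` with `P`, `Q` invertible, as both reduce
to the same rank normal form up to a permutation. A multiplicative `φ` then gives
`φ B = φ P * φ A * φ Q`, so `rank (φ B) ≤ rank (φ A)`, and the reverse inequality by symmetry.
-/

namespace Matrix

variable {K m : Type*} [Field K] [Fintype m] [DecidableEq m]

theorem exists_units_mul_mul_eq_of_rank_eq {A B : Matrix m m K} (h : A.rank = B.rank) :
    ∃ P Q : (Matrix m m K)ˣ, B = P * A * Q := by
  obtain ⟨_, _, e₁, ⟨V₁, rfl⟩, ⟨U₁, rfl⟩, h₁⟩ := exists_rank_normal_form A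
  obtain ⟨_, _, e₂, ⟨V₂, rfl⟩, ⟨U₂, rfl⟩, h₂⟩ := exists_rank_normal_form B
  generalize A.rank = r at *
  subst h
  -- the two normal forms differ by a simultaneous permutation of rows and columns
  set σ : Equiv.Perm m := e₂.trans e₁.symm
  have hunit (τ : Equiv.Perm m) : IsUnit (τ.permMatrix K) :=
    (isUnit_iff_isUnit_det _).2 <| by
      rw [det_permutation]; exact (Equiv.Perm.sign τ).isUnit.map (Int.castRingHom K)
  obtain ⟨S, hS⟩ := hunit σ
  obtain ⟨T, hT⟩ := hunit σ⁻¹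
  have hnormal : S * (V₁ * A * U₁) * T = (V₂ * B * U₂ : Matrix m m K) := by
    rw [h₁, h₂, hS, hT, PEquiv.toMatrix_toPEquiv_mul, PEquiv.mul_toMatrix_toPEquiv,
      submatrix_submatrix]
    simp [σ, Equiv.Perm.inv_def, ← Function.comp_assoc]
  have hB : B = ((V₂⁻¹ : (Matrix m m K)ˣ) * (V₂ * B * U₂) * (U₂⁻¹ : (Matrix m m K)ˣ) :
      Matrix m m K) := by
    simp [mul_assoc]
  refine ⟨V₂⁻¹ * S * V₁, U₁ * T * U₂⁻¹, ?_⟩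
  rw [hB, ← hnormal]
  simp only [Units.val_mul, mul_assoc]

theorem rank_map_le_of_rank_eq {R p : Type*} [CommRing R] [StrongRankCondition R] [Fintype p]
    {φ : Matrix m m K → Matrix p p R} (hφ : ∀ A B, φ (A * B) = φ A * φ B)
    {A B : Matrix m m K} (h : A.rank = B.rank) : (φ B).rank ≤ (φ A).rank := by
  obtain ⟨P, Q, rfl⟩ := exists_units_mul_mul_eq_of_rank_eq h
  calc (φ (P * A * Q)).rank = (φ P * (φ A * φ Q)).rank := by rw [hφ, hφ, mul_assoc]
    _ ≤ (φ A * φ Q).rank := rank_mul_le_right _ _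
    _ ≤ (φ A).rank := rank_mul_le_left _ _

end Matrix

theorem stmt_2_general (n : ℕ)
    (φ : Matrix (Fin n) (Fin n) ℝ → Matrix (Fin n) (Fin n) ℝ)
    (hφ : ∀ A B : Matrix (Fin n) (Fin n) ℝ, φ (A * B) = φ A * φ B)
    (r : ℕ)
    (A B : Matrix (Fin n) (Fin n) ℝ)
    (hA : A.rank = r) (hB : B.rank = r) :
    (φ A).rank = (φ B).rank :=
  le_antisymm (Matrix.rank_map_le_of_rank_eq hφ (hB.trans hA.symm))
    (Matrix.rank_map_le_of_rank_eq hφ (hA.trans hB.symm))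

/-- If `φ : M_n(ℝ) → M_n(ℝ)` is multiplicative (not assumed additive or linear), then any two
matrices of the same rank `r` have images of the same rank. -/
theorem stmt_2 (n : ℕ) (hn : 0 < n)
    (φ : Matrix (Fin n) (Fin n) ℝ → Matrix (Fin n) (Fin n) ℝ)
    (hφ : ∀ A B : Matrix (Fin n) (Fin n) ℝ, φ (A * B) = φ A * φ B)
    (r : ℕ) (hr : r ≤ n)
    (A B : Matrix (Fin n) (Fin n) ℝ)
    (hA : A.rank = r) (hB : B.rank = r) :
    (φ A).rank = (φ B).rank :=
  stmt_2_general n φ hφ r A B hA hB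
end

section
/- If φ(0) = 0 and there exists a matrix W ∈ M_n(ℝ) of rank 1 with φ(W) ≠ 0, then there exists an invertible matrix R ∈ M_n(ℝ) such that φ(E_{ij}) = R E_{ij} R^{−1} for all i, j = 1, 2, …, n. -/
/-!
The images `F i j = φ (E i j)` form a system of matrix units. A rank-one `W` with `W i j ≠ 0`
satisfies `W = W * E j i * W / W i j`, so `φ W ≠ 0` forces `F j i ≠ 0`, hence `F j j ≠ 0`.
A system of matrix units in `Mₙ(K)` with `F z z ≠ 0` is conjugate to the standard one: for
`v ≠ 0` fixed by `F z z`, the matrix `R` with columns `F k z v` satisfies `F i j * R = R * E i j`,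
and `R` is injective because `F z m` sends `R x` to `x m • v`.
-/

open Matrix

structure IsMatrixUnits {ι α : Type*} [Mul α] [Zero α] (F : ι → ι → α) : Prop where
  mul_same : ∀ i j l, F i j * F j l = F i l
  mul_of_ne : ∀ {j k} (i l), j ≠ k → F i j * F k l = 0

namespace IsMatrixUnits

variable {ι : Type*}

theorem of_map_single {R α : Type*} [Fintype ι] [DecidableEq ι] [Semiring R] [Mul α] [Zero α]
    {φ : Matrix ι ι R → α} (hφ : ∀ A B, φ (A * B) = φ A * φ B) (h0 : φ 0 = 0) :
    IsMatrixUnits fun i j => φ (single i j 1) where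
  mul_same i j l := by rw [← hφ, single_mul_single_same, one_mul]
  mul_of_ne i l hjk := by rw [← hφ, single_mul_single_of_ne _ _ _ _ hjk, h0]

theorem diag_ne_zero {α : Type*} [MulZeroClass α] {F : ι → ι → α} (hF : IsMatrixUnits F)
    {i j : ι} (h : F i j ≠ 0) : F i i ≠ 0 := by
  intro hii
  rw [← hF.mul_same i i j, hii, zero_mul] at h
  exact h rfl

variable {K : Type*} [Field K] [Fintype ι] [DecidableEq ι] {F : ι → ι → Matrix ι ι K}

theorem exists_conj_single (hF : IsMatrixUnits F) {z : ι} (hz : F z z ≠ 0) :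
    ∃ R : Matrix ι ι K, IsUnit R ∧ ∀ i j, F i j = R * single i j 1 * R⁻¹ := by
  obtain ⟨v, hv0, hvz⟩ : ∃ v : ι → K, v ≠ 0 ∧ F z z *ᵥ v = v := by
    obtain ⟨w, hw⟩ : ∃ w, F z z *ᵥ w ≠ 0 := by
      by_contra! h
      exact hz (mulVec_injective (funext fun w => by rw [h, zero_mulVec]))
    exact ⟨F z z *ᵥ w, hw, by rw [mulVec_mulVec, hF.mul_same]⟩
  set R : Matrix ι ι K := (of fun k => F k z *ᵥ v)ᵀ
  have hMR : ∀ M a k, (M * R) a k = ((M * F k z) *ᵥ v) a := fun M a k => by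
    rw [← mulVec_mulVec]; rfl
  have hR : ∀ i j, F i j * R = R * single i j 1 := by
    intro i j
    ext a k
    rcases eq_or_ne j k with rfl | hjk
    · rw [hMR, hF.mul_same, mul_single_apply_same, mul_one]; rfl
    · rw [hMR, hF.mul_of_ne _ _ hjk, zero_mulVec, mul_single_apply_of_ne (hbj := hjk.symm)]; rfl
  have hRv : ∀ m x, F z m *ᵥ (R *ᵥ x) = x m • v := fun m x => by
    rw [mulVec_mulVec, hR, ← mulVec_mulVec, single_mulVec, one_mul, ← Pi.single, mulVec_single]
    ext a
    simp [R, hvz, mul_comm]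
  have hRu : IsUnit R := by
    rw [← mulVec_injective_iff_isUnit]
    intro x y hxy
    funext m
    exact smul_left_injective K hv0 (show x m • v = y m • v by rw [← hRv, ← hRv, hxy])
  refine ⟨R, hRu, fun i j => ?_⟩
  rw [← hR, mul_nonsing_inv_cancel_right _ _ ((isUnit_iff_isUnit_det R).mp hRu)]

end IsMatrixUnits

namespace Matrix

variable {K m n : Type*} [Field K] [Fintype n]

theorem exists_eq_vecMulVec_of_rank_le_one {A : Matrix m n K} (h : A.rank ≤ 1) :
    ∃ (u : m → K) (c : n → K), A = vecMulVec u c := by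
  classical
  obtain ⟨v, hv⟩ := finrank_le_one_iff.mp h
  choose c hc using fun b => hv ⟨A *ᵥ Pi.single b 1, LinearMap.mem_range_self _ _⟩
  refine ⟨v, c, ext fun a b => ?_⟩
  have hcol : c b * (v : m → K) a = A a b := by simpa using congrFun (congrArg Subtype.val (hc b)) a
  rw [vecMulVec_apply, ← hcol, mul_comm]

theorem mul_single_inv_mul_of_rank_le_one [Fintype m] [DecidableEq m] [DecidableEq n]
    {A : Matrix m n K} (h : A.rank ≤ 1) {i : m} {j : n} (hij : A i j ≠ 0) :
    A * single j i (A i j)⁻¹ * A = A := by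
  obtain ⟨u, c, rfl⟩ := exists_eq_vecMulVec_of_rank_le_one h
  ext a b
  obtain ⟨hu, hc⟩ : u i ≠ 0 ∧ c j ≠ 0 := by simpa [vecMulVec_apply, not_or] using hij
  simp only [mul_apply, vecMulVec_apply, single_apply, ite_and, mul_ite, mul_zero, ite_mul,
    zero_mul, Finset.sum_ite_eq, Finset.mem_univ, if_true]
  field_simp

end Matrix

theorem stmt_3_general (n : ℕ)
    (φ : Matrix (Fin n) (Fin n) ℝ → Matrix (Fin n) (Fin n) ℝ)
    (hφ : ∀ A B : Matrix (Fin n) (Fin n) ℝ, φ (A * B) = φ A * φ B)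
    (h0 : φ 0 = 0)
    (hW : ∃ W : Matrix (Fin n) (Fin n) ℝ, W.rank = 1 ∧ φ W ≠ 0) :
    ∃ R : Matrix (Fin n) (Fin n) ℝ, IsUnit R ∧
      ∀ i j : Fin n,
        φ (Matrix.single i j (1 : ℝ)) =
          R * Matrix.single i j (1 : ℝ) * R⁻¹ := by
  obtain ⟨W, hrank, hφW⟩ := hW
  have hF := IsMatrixUnits.of_map_single hφ h0
  obtain ⟨i, j, hij⟩ : ∃ i j, W i j ≠ 0 := by
    by_contra! h
    exact hφW (by rw [show W = 0 from ext h, h0])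
  have hji : φ (single j i 1) ≠ 0 := by
    intro hji
    apply hφW
    calc φ W = φ (W * (single j i 1 * single i i (W i j)⁻¹) * W) := by
          rw [single_mul_single_same, one_mul, mul_single_inv_mul_of_rank_le_one hrank.le hij]
      _ = 0 := by rw [hφ, hφ, hφ, hji, zero_mul, mul_zero, zero_mul]
  exact hF.exists_conj_single (hF.diag_ne_zero hji)

/-- If `φ : M_n(ℝ) → M_n(ℝ)` is multiplicative, `φ(0) = 0`, and there exists a rank-one matrix
`W` with `φ(W) ≠ 0`, then there is an invertible matrix `R` with
`φ(E_{ij}) = R E_{ij} R⁻¹` for all `i, j`. -/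
theorem stmt_3 (n : ℕ) (hn : 0 < n)
    (φ : Matrix (Fin n) (Fin n) ℝ → Matrix (Fin n) (Fin n) ℝ)
    (hφ : ∀ A B : Matrix (Fin n) (Fin n) ℝ, φ (A * B) = φ A * φ B)
    (h0 : φ 0 = 0)
    (hW : ∃ W : Matrix (Fin n) (Fin n) ℝ, W.rank = 1 ∧ φ W ≠ 0) :
    ∃ R : Matrix (Fin n) (Fin n) ℝ, IsUnit R ∧
      ∀ i j : Fin n,
        φ (Matrix.single i j (1 : ℝ)) =
          R * Matrix.single i j (1 : ℝ) * R⁻¹ :=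
  stmt_3_general n φ hφ h0 hW
end

section
/- P has exactly n roots, all of which are real, simple (multiplicity one), and lie in the open interval (a, b); that is, there exist n distinct points x_1, …, x_n in (a, b) and a nonzero real constant c such that P(x) = c·(x − x_1)⋯(x − x_n). -/
open Polynomial

open Polynomial

/-- If a real polynomial changes sign between `u` and `v`, it has a root of odd
multiplicity in `(u, v)`. -/
lemma exists_odd_rootMultiplicity :
    ∀ N (f : ℝ[X]), f.natDegree ≤ N → ∀ u v : ℝ, u < v →
      f.eval u * f.eval v < 0 → ∃ w ∈ Set.Ioo u v, Odd (f.rootMultiplicity w) := by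
  intro N
  induction N using Nat.strong_induction_on with
  | _ N ih =>
    intro f hN u v huv hsign
    have hf : f ≠ 0 := by
      rintro rfl; simp at hsign
    have hcont : ContinuousOn (fun x => f.eval x) (Set.Icc u v) :=
      (f.continuous_aeval).continuousOn
    have hroot : ∃ w ∈ Set.Ioo u v, f.eval w = 0 := by
      rcases mul_neg_iff.1 hsign with ⟨hu, hv⟩ | ⟨hu, hv⟩
      · obtain ⟨w, hw, hw0⟩ := intermediate_value_Ioo' huv.le hcont (Set.mem_Ioo.2 ⟨hv, hu⟩)
        exact ⟨w, hw, hw0⟩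
      · obtain ⟨w, hw, hw0⟩ := intermediate_value_Ioo huv.le hcont (Set.mem_Ioo.2 ⟨hu, hv⟩)
        exact ⟨w, hw, hw0⟩
    obtain ⟨w, hw, hw0⟩ := hroot
    set m := f.rootMultiplicity w with hm
    have hm1 : 1 ≤ m := (f.rootMultiplicity_pos hf).2 hw0
    rcases Nat.even_or_odd m with heven | hodd
    case inr => exact ⟨w, hw, hodd⟩
    · obtain ⟨g, hfg, hgd⟩ := f.exists_eq_pow_rootMultiplicity_mul_and_not_dvd hf w
      rw [← hm] at hfg
      have hgw : g.eval w ≠ 0 := fun h => hgd (dvd_iff_isRoot.2 h)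
      have hg0 : g ≠ 0 := fun h => hgw (by simp [h])
      have hdeg : f.natDegree = m + g.natDegree := by
        rw [hfg, natDegree_mul (pow_ne_zero _ (X_sub_C_ne_zero w)) hg0]
        · simp [natDegree_pow]
      have hglt : g.natDegree < N :=
        lt_of_lt_of_le (by omega) hN
      have hup : 0 < (u - w) ^ m := heven.pow_pos (sub_ne_zero.2 hw.1.ne)
      have hvp : 0 < (v - w) ^ m := heven.pow_pos (sub_ne_zero.2 hw.2.ne')
      have hgsign : g.eval u * g.eval v < 0 := by
        have h1 : f.eval u = (u - w) ^ m * g.eval u := by rw [hfg]; simp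
        have h2 : f.eval v = (v - w) ^ m * g.eval v := by rw [hfg]; simp
        rw [h1, h2] at hsign
        nlinarith [mul_pos hup hvp]
      obtain ⟨w', hw', hodd'⟩ := ih g.natDegree hglt g le_rfl u v huv hgsign
      have hww : w' ≠ w := by
        rintro rfl
        exact hgw ((g.rootMultiplicity_pos hg0).1 hodd'.pos)
      refine ⟨w', hw', ?_⟩
      have hXm : rootMultiplicity w' ((X - C w) ^ m) = 0 := by
        apply rootMultiplicity_eq_zero
        simp [IsRoot, sub_eq_zero, hww]
      have : f.rootMultiplicity w' = g.rootMultiplicity w' := by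
        conv_lhs => rw [hfg]
        rw [rootMultiplicity_mul (by rw [← hfg]; exact hf), hXm, zero_add]
      rw [this]; exact hodd'
open Polynomial MeasureTheory

lemma integral_pos_of_nonneg (f : ℝ[X]) (hf : f ≠ 0) {a b : ℝ} (hab : a < b)
    (h : ∀ x ∈ Set.Ioo a b, 0 ≤ f.eval x) : 0 < ∫ x in a..b, f.eval x := by
  have hfi : IntervalIntegrable (fun x => f.eval x) volume a b :=
    (f.continuous_aeval).intervalIntegrable _ _
  rw [intervalIntegral.integral_pos_iff_support_of_nonneg_ae' ?_ hfi]
  · refine ⟨hab, ?_⟩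
    have hzero : volume {x : ℝ | f.IsRoot x} = 0 :=
      (Polynomial.finite_setOf_isRoot hf).measure_zero _
    have hsub : Set.Ioc a b \ {x : ℝ | f.IsRoot x} ⊆
        Function.support (fun x => f.eval x) ∩ Set.Ioc a b := by
      rintro x ⟨hx1, hx2⟩
      exact ⟨hx2, hx1⟩
    calc (0 : ENNReal) < ENNReal.ofReal (b - a) := by
          simp [hab]
      _ = volume (Set.Ioc a b) := (Real.volume_Ioc).symm
      _ = volume (Set.Ioc a b \ {x : ℝ | f.IsRoot x}) := (measure_diff_null hzero).symm
      _ ≤ volume (Function.support (fun x => f.eval x) ∩ Set.Ioc a b) := measure_mono hsub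
  · rw [Set.uIoc_of_le hab.le, ← Measure.restrict_congr_set Ioo_ae_eq_Ioc]
    exact (ae_restrict_iff' measurableSet_Ioo).2 (ae_of_all _ h)

/-- A real polynomial of degree exactly `n ≥ 1` that is orthogonal on `[a,b]` to all powers
`x^k`, `k = 0, …, n−1`, has `n` real simple roots, all lying in `(a, b)`: there exist `n`
distinct points `x_1, …, x_n ∈ (a, b)` and a nonzero constant `c` with
`P = c (X − x_1) ⋯ (X − x_n)`. -/
theorem stmt_4 (a b : ℝ) (hab : a < b) (n : ℕ) (hn : 1 ≤ n)
    (P : Polynomial ℝ) (hdeg : P.degree = (n : ℕ))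
    (horth : ∀ k : ℕ, k < n → ∫ x in a..b, P.eval x * x ^ k = 0) :
    ∃ x : Fin n → ℝ, Function.Injective x ∧ (∀ i, x i ∈ Set.Ioo a b) ∧
      ∃ c : ℝ, c ≠ 0 ∧
        P = Polynomial.C c * ∏ i : Fin n, (Polynomial.X - Polynomial.C (x i)) := by
  classical
  have hP0 : P ≠ 0 := fun h => by
    rw [h, degree_zero] at hdeg
    exact absurd hdeg (by simp)
  have hnat : P.natDegree = n := natDegree_eq_of_degree_eq_some hdeg
  set S : Finset ℝ := P.roots.toFinset.filter
      (fun r => r ∈ Set.Ioo a b ∧ Odd (P.rootMultiplicity r)) with hS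
  have hSmem : ∀ r, r ∈ S ↔ r ∈ Set.Ioo a b ∧ Odd (P.rootMultiplicity r) := by
    intro r
    simp only [hS, Finset.mem_filter, Multiset.mem_toFinset]
    constructor
    · rintro ⟨_, h2⟩; exact h2
    · rintro ⟨h1, h2⟩
      exact ⟨(mem_roots hP0).2 ((P.rootMultiplicity_pos hP0).1 h2.pos), h1, h2⟩
  -- Step 1: S has at least n elements
  have hncard : n ≤ S.card := by
    by_contra hlt
    push_neg at hlt
    set Q : ℝ[X] := (S.val.map fun r => X - C r).prod with hQ
    have hQmonic : Q.Monic := monic_multiset_prod_of_monic _ _ (fun r _ => monic_X_sub_C _)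
    have hQ0 : Q ≠ 0 := hQmonic.ne_zero
    have hQdeg : Q.natDegree = S.card := by
      rw [hQ, natDegree_multiset_prod_X_sub_C_eq_card]; rfl
    have hQroots : Q.roots = S.val := roots_multiset_prod_X_sub_C _
    set f : ℝ[X] := P * Q with hf
    have hf0 : f ≠ 0 := mul_ne_zero hP0 hQ0
    -- every root of f in (a,b) has even multiplicity
    have heven : ∀ w ∈ Set.Ioo a b, Even (f.rootMultiplicity w) := by
      intro w hwab
      have hfm : f.rootMultiplicity w = P.rootMultiplicity w + Q.rootMultiplicity w :=
        rootMultiplicity_mul hf0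
      have hQm : Q.rootMultiplicity w = if w ∈ S then 1 else 0 := by
        rw [← count_roots, hQroots]
        split_ifs with hws
        · exact Multiset.count_eq_one_of_mem S.nodup hws
        · exact Multiset.count_eq_zero_of_notMem hws
      by_cases hws : w ∈ S
      · have hodd := ((hSmem w).1 hws).2
        rw [hfm, hQm, if_pos hws]
        exact hodd.add_one
      · have hnotodd : ¬ Odd (P.rootMultiplicity w) := fun hodd =>
          hws ((hSmem w).2 ⟨hwab, hodd⟩)
        rw [hfm, hQm, if_neg hws, add_zero]
        exact Nat.not_odd_iff_even.1 hnotodd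
    -- f has constant sign on (a,b)
    have hsign : (∀ x ∈ Set.Ioo a b, 0 ≤ f.eval x) ∨ (∀ x ∈ Set.Ioo a b, f.eval x ≤ 0) := by
      by_contra hc
      push_neg at hc
      obtain ⟨⟨u, hu, hu'⟩, ⟨v, hv, hv'⟩⟩ := hc
      rcases lt_trichotomy u v with h | h | h
      · obtain ⟨w, hw, hodd⟩ :=
          exists_odd_rootMultiplicity f.natDegree f le_rfl u v h (by nlinarith)
        exact (Nat.not_even_iff_odd.2 hodd)
          (heven w ⟨hu.1.trans hw.1, hw.2.trans hv.2⟩)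
      · subst h; linarith
      · obtain ⟨w, hw, hodd⟩ :=
          exists_odd_rootMultiplicity f.natDegree f le_rfl v u h (by nlinarith)
        exact (Nat.not_even_iff_odd.2 hodd)
          (heven w ⟨hv.1.trans hw.1, hw.2.trans hu.2⟩)
    -- the integral of f vanishes by orthogonality
    have hint : ∫ x in a..b, f.eval x = 0 := by
      have hlt' : Q.natDegree < n := by rw [hQdeg]; exact hlt
      have heval : ∀ x : ℝ, f.eval x
          = ∑ k ∈ Finset.range n, Q.coeff k * (P.eval x * x ^ k) := by
        intro x
        rw [hf, eval_mul, eval_eq_sum_range' hlt', Finset.mul_sum]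
        exact Finset.sum_congr rfl fun k _ => mul_left_comm _ _ _
      calc ∫ x in a..b, f.eval x
          = ∫ x in a..b, ∑ k ∈ Finset.range n, Q.coeff k * (P.eval x * x ^ k) := by
            simp_rw [heval]
        _ = ∑ k ∈ Finset.range n, ∫ x in a..b, Q.coeff k * (P.eval x * x ^ k) := by
            apply intervalIntegral.integral_finset_sum
            intro k _
            exact (Continuous.intervalIntegrable (continuous_const.mul (P.continuous.mul (continuous_pow k))) _ _)
        _ = 0 := by
            apply Finset.sum_eq_zero
            intro k hk
            rw [intervalIntegral.integral_const_mul, horth k (Finset.mem_range.1 hk), mul_zero]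
    rcases hsign with hpos | hneg
    · exact absurd hint (ne_of_gt (integral_pos_of_nonneg f hf0 hab hpos))
    · have hpos' := integral_pos_of_nonneg (-f) (neg_ne_zero.2 hf0) hab
        (fun x hx => by simpa using hneg x hx)
      simp only [eval_neg, intervalIntegral.integral_neg, hint, neg_zero] at hpos'
      exact lt_irrefl 0 hpos'
  -- Step 2: counting forces exactly n simple roots, all in S
  have hsum1 : S.card ≤ ∑ r ∈ S, P.roots.count r := by
    rw [Finset.card_eq_sum_ones]
    apply Finset.sum_le_sum
    intro r hr
    have hr' : r ∈ P.roots.toFinset := Finset.filter_subset _ _ hr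
    exact (Multiset.one_le_count_iff_mem).2 (Multiset.mem_toFinset.1 hr')
  have hsum2 : ∑ r ∈ S, P.roots.count r ≤ ∑ r ∈ P.roots.toFinset, P.roots.count r :=
    Finset.sum_le_sum_of_subset (Finset.filter_subset _ _)
  have hsum3 : ∑ r ∈ P.roots.toFinset, P.roots.count r = Multiset.card P.roots :=
    Multiset.toFinset_sum_count_eq _
  have hcardle : Multiset.card P.roots ≤ n := hnat ▸ P.card_roots'
  have hScard : S.card = n := by omega
  have hrootscard : Multiset.card P.roots = n := by omega
  have hsumeq : ∑ r ∈ S, P.roots.count r = S.card := by omega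
  have hcount1 : ∀ r ∈ S, P.roots.count r = 1 := by
    intro r hr
    by_contra hne
    have h1 : 1 ≤ P.roots.count r := by
      have hr' : r ∈ P.roots.toFinset := Finset.filter_subset _ _ hr
      exact (Multiset.one_le_count_iff_mem).2 (Multiset.mem_toFinset.1 hr')
    have hlt : ∑ r ∈ S, (1 : ℕ) < ∑ r ∈ S, P.roots.count r := by
      apply Finset.sum_lt_sum
      · intro i hi
        have hi' : i ∈ P.roots.toFinset := Finset.filter_subset _ _ hi
        exact (Multiset.one_le_count_iff_mem).2 (Multiset.mem_toFinset.1 hi')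
      · exact ⟨r, hr, by omega⟩
    rw [← Finset.card_eq_sum_ones] at hlt
    omega
  have htoF : P.roots.toFinset ⊆ S := by
    intro r hr
    by_contra hrs
    have hlt : ∑ r ∈ S, P.roots.count r < ∑ r ∈ P.roots.toFinset, P.roots.count r :=
      Finset.sum_lt_sum_of_subset (f := fun r => P.roots.count r)
      (Finset.filter_subset
        (fun r => r ∈ Set.Ioo a b ∧ Odd (P.rootMultiplicity r)) P.roots.toFinset) hr hrs
      (Multiset.count_pos.2 (Multiset.mem_toFinset.1 hr))
      (fun _ _ _ => Nat.zero_le _)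
    omega
  have hroots_eq : P.roots = S.val := by
    refine Multiset.ext.2 fun r => ?_
    by_cases hr : r ∈ S
    · rw [hcount1 r hr, Multiset.count_eq_one_of_mem S.nodup hr]
    · rw [Multiset.count_eq_zero_of_notMem hr, Multiset.count_eq_zero_of_notMem]
      intro hmem
      exact hr (htoF (Multiset.mem_toFinset.2 hmem))
  have hfact := C_leadingCoeff_mul_prod_multiset_X_sub_C (p := P) (by rw [hrootscard, hnat])
  -- Step 3: assemble the answer
  let e : {x // x ∈ S} ≃ Fin n := S.equivFinOfCardEq hScard
  refine ⟨fun i => ((e.symm i : {x // x ∈ S}) : ℝ), ?_, ?_, P.leadingCoeff,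
    leadingCoeff_ne_zero.2 hP0, ?_⟩
  · intro i j hij
    exact e.symm.injective (Subtype.ext hij)
  · intro i
    exact ((hSmem _).1 (e.symm i).2).1
  · conv_lhs => rw [← hfact]
    congr 1
    rw [hroots_eq]
    have h1 : (S.val.map fun r => X - C r).prod = ∏ r ∈ S, (X - C r) :=
      (Finset.prod_eq_multiset_prod _ _).symm
    rw [h1, ← Finset.prod_coe_sort S (fun r => X - C (r : ℝ))]
    exact (Equiv.prod_comp e.symm fun s => X - C (s : ℝ)).symm
end

section
/- Let x_1, …, x_n denote the n distinct roots of P in (a, b). There exist real weights w_1, …, w_n such that ∫_a^b Q(x) dx = Σ_{i=1}^{n} w_i Q(x_i) for every real polynomial Q of degree at most 2n − 1. -/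
/-!
Divide `Q` by `P`: `Q = P * S + R` with `deg S < n` and `deg R < n`. Orthogonality kills
`∫ P * S`, and `R`, which agrees with `Q` at the roots of `P`, is integrated exactly by
integrating its Lagrange interpolant on those `n` nodes.
-/

open Polynomial

namespace Polynomial

theorem natDegree_div_le {K : Type*} [Field K] (p q : K[X]) :
    (p / q).natDegree ≤ p.natDegree - q.natDegree := by
  rcases eq_or_ne q 0 with rfl | hq
  · simp
  rw [div_def]
  calc (C q.leadingCoeff⁻¹ * (p /ₘ (q * C q.leadingCoeff⁻¹))).natDegree
      ≤ (p /ₘ (q * C q.leadingCoeff⁻¹)).natDegree := natDegree_C_mul_le _ _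
    _ = p.natDegree - q.natDegree := by
      rw [natDegree_divByMonic _ (monic_mul_leadingCoeff_inv hq),
        natDegree_mul_leadingCoeff_inv _ hq]

theorem integral_eval_mul_eq_zero_of_natDegree_lt {a b : ℝ} {n : ℕ} {P : ℝ[X]}
    (horth : ∀ k < n, ∫ t in a..b, P.eval t * t ^ k = 0) {S : ℝ[X]} (hS : S.natDegree < n) :
    ∫ t in a..b, (P * S).eval t = 0 := by
  have hexpand :
      ∀ t, (P * S).eval t = ∑ k ∈ Finset.range n, S.coeff k * (P.eval t * t ^ k) := by
    intro t
    rw [eval_mul, eval_eq_sum_range' hS, Finset.mul_sum]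
    exact Finset.sum_congr rfl fun k _ => by ring
  simp_rw [hexpand]
  rw [intervalIntegral.integral_finsetSum fun k _ =>
    Continuous.intervalIntegrable (by fun_prop) a b]
  exact Finset.sum_eq_zero fun k hk => by
    rw [intervalIntegral.integral_const_mul, horth k (Finset.mem_range.mp hk), mul_zero]

theorem integral_eval_eq_sum_integral_lagrange_basis {ι : Type*} [DecidableEq ι]
    {s : Finset ι} {x : ι → ℝ} (hx : Set.InjOn x s) {R : ℝ[X]} (hR : R.degree < s.card)
    (a b : ℝ) :
    ∫ t in a..b, R.eval t =
      ∑ i ∈ s, (∫ t in a..b, (Lagrange.basis s x i).eval t) * R.eval (x i) := by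
  conv_lhs => rw [Lagrange.eq_interpolate hx hR, Lagrange.interpolate_apply]
  simp only [eval_finsetSum, eval_mul, eval_C]
  rw [intervalIntegral.integral_finsetSum fun i _ =>
    Continuous.intervalIntegrable (by fun_prop) a b]
  exact Finset.sum_congr rfl fun i _ => by rw [intervalIntegral.integral_const_mul, mul_comm]

end Polynomial

theorem stmt_5_general (a b : ℝ) (n : ℕ) (hn : 1 ≤ n)
    (P : Polynomial ℝ) (hdeg : P.degree = (n : ℕ))
    (horth : ∀ k : ℕ, k < n → ∫ x in a..b, P.eval x * x ^ k = 0)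
    (x : Fin n → ℝ) (hinj : Function.Injective x)
    (hroot : ∀ i, P.eval (x i) = 0) :
    ∃ w : Fin n → ℝ,
      ∀ Q : Polynomial ℝ, Q.natDegree ≤ 2 * n - 1 →
        (∫ t in a..b, Q.eval t) = ∑ i : Fin n, w i * Q.eval (x i) := by
  have hP0 : P ≠ 0 := by rintro rfl; simp at hdeg
  refine ⟨fun i => ∫ t in a..b, (Lagrange.basis Finset.univ x i).eval t, fun Q hQ => ?_⟩
  have hquot : (Q / P).natDegree < n := by
    have := natDegree_div_le Q P
    rw [natDegree_eq_of_degree_eq_some hdeg] at this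
    omega
  have hrem : (Q % P).degree < (Finset.univ : Finset (Fin n)).card := by
    simpa [hdeg] using degree_mod_lt Q hP0
  have hnodes : ∀ i, Q.eval (x i) = (Q % P).eval (x i) := fun i => by
    simp [EuclideanDomain.mod_eq_sub_mul_div, hroot i]
  conv_lhs => rw [← EuclideanDomain.div_add_mod Q P]
  simp_rw [eval_add, hnodes]
  rw [intervalIntegral.integral_add ((P * (Q / P)).continuous.intervalIntegrable a b)
      ((Q % P).continuous.intervalIntegrable a b),
    integral_eval_mul_eq_zero_of_natDegree_lt horth hquot, zero_add]
  exact integral_eval_eq_sum_integral_lagrange_basis hinj.injOn hrem a b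

/-- Gaussian quadrature: if `P` has degree exactly `n ≥ 1`, is orthogonal on `[a,b]` to all
powers `x^k`, `k < n`, and has `n` distinct roots `x_1, …, x_n` in `(a, b)`, then there are
weights `w_1, …, w_n` such that `∫_a^b Q = Σ_i w_i Q(x_i)` for every polynomial `Q` of degree
at most `2n − 1`. -/
theorem stmt_5 (a b : ℝ) (hab : a < b) (n : ℕ) (hn : 1 ≤ n)
    (P : Polynomial ℝ) (hdeg : P.degree = (n : ℕ))
    (horth : ∀ k : ℕ, k < n → ∫ x in a..b, P.eval x * x ^ k = 0)
    (x : Fin n → ℝ) (hinj : Function.Injective x)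
    (hmem : ∀ i, x i ∈ Set.Ioo a b)
    (hroot : ∀ i, P.eval (x i) = 0) :
    ∃ w : Fin n → ℝ,
      ∀ Q : Polynomial ℝ, Q.natDegree ≤ 2 * n - 1 →
        (∫ t in a..b, Q.eval t) = ∑ i : Fin n, w i * Q.eval (x i) :=
  stmt_5_general a b n hn P hdeg horth x hinj hroot
end

section
/- If P is a nonzero real polynomial satisfying ∫_a^b P(x) x^k dx = 0 for k = 0, 1, …, n−1 (with a < b and n ≥ 1), then P has at least n distinct roots of odd multiplicity in the open interval (a, b). -/
open Polynomial

private lemma odd_root_aux : ∀ (N : ℕ) (g : Polynomial ℝ), g.natDegree ≤ N →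
    ∀ x1 x2 : ℝ, x1 < x2 → g.eval x1 * g.eval x2 < 0 →
    ∃ r ∈ Set.Ioo x1 x2, Odd (g.rootMultiplicity r) := by
  intro N
  induction N with
  | zero =>
    intro g hdeg x1 x2 _ hsign
    obtain ⟨c, rfl⟩ := Polynomial.natDegree_eq_zero.mp (Nat.le_zero.mp hdeg)
    simp only [eval_C] at hsign
    nlinarith [mul_self_nonneg c]
  | succ N ih =>
    intro g hdeg x1 x2 hx hsign
    have hg : g ≠ 0 := by rintro rfl; simp at hsign
    have h1 : g.eval x1 ≠ 0 := by intro h; rw [h] at hsign; simp at hsign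
    have h2 : g.eval x2 ≠ 0 := by intro h; rw [h] at hsign; simp at hsign
    -- IVT gives a root in (x1, x2)
    have hcont : ContinuousOn (fun x => g.eval x) (Set.Icc x1 x2) :=
      g.continuous.continuousOn
    have : ∃ r ∈ Set.Ioo x1 x2, g.eval r = 0 := by
      rcases lt_or_gt_of_ne h1 with hn1 | hp1
      · have hp2 : 0 < g.eval x2 := by nlinarith
        have := intermediate_value_Ioo hx.le hcont
        have h0 : (0 : ℝ) ∈ Set.Ioo (g.eval x1) (g.eval x2) := ⟨hn1, hp2⟩
        obtain ⟨r, hr, hr0⟩ := this h0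
        exact ⟨r, hr, hr0⟩
      · have hn2 : g.eval x2 < 0 := by nlinarith
        have := intermediate_value_Ioo' hx.le hcont
        have h0 : (0 : ℝ) ∈ Set.Ioo (g.eval x2) (g.eval x1) := ⟨hn2, hp1⟩
        obtain ⟨r, hr, hr0⟩ := this h0
        exact ⟨r, hr, hr0⟩
    obtain ⟨r, hrI, hr0⟩ := this
    set m := g.rootMultiplicity r with hm
    set h := g /ₘ (X - C r) ^ m with hh
    have hfact : (X - C r) ^ m * h = g := g.pow_mul_divByMonic_rootMultiplicity_eq r
    have hhr : h.eval r ≠ 0 := eval_divByMonic_pow_rootMultiplicity_ne_zero r hg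
    have hmpos : 0 < m := (rootMultiplicity_pos hg).2 hr0
    rcases Nat.even_or_odd m with hme | hmo
    · -- even multiplicity: recurse on h
      have hh0 : h ≠ 0 := fun e => hhr (by simp [e])
      have hdegh : h.natDegree ≤ N := by
        have hXC : ((X : Polynomial ℝ) - C r) ^ m ≠ 0 :=
          pow_ne_zero m (X_sub_C_ne_zero r)
        have := natDegree_mul hXC hh0
        rw [hfact] at this
        rw [natDegree_pow, natDegree_X_sub_C, mul_one] at this
        omega
      have hne1 : x1 ≠ r := fun e => h1 (e ▸ hr0)
      have hne2 : x2 ≠ r := fun e => h2 (e ▸ hr0)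
      have hp1 : 0 < (x1 - r) ^ m := hme.pow_pos (sub_ne_zero.mpr hne1)
      have hp2 : 0 < (x2 - r) ^ m := hme.pow_pos (sub_ne_zero.mpr hne2)
      have e1 : g.eval x1 = (x1 - r) ^ m * h.eval x1 := by
        rw [← hfact]; simp
      have e2 : g.eval x2 = (x2 - r) ^ m * h.eval x2 := by
        rw [← hfact]; simp
      have hs : h.eval x1 * h.eval x2 < 0 := by
        rw [e1, e2] at hsign
        by_contra hc
        push_neg at hc
        nlinarith [mul_pos hp1 hp2, mul_nonneg (mul_pos hp1 hp2).le hc]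
      obtain ⟨r', hr', hodd⟩ := ih h hdegh x1 x2 hx hs
      have hrr : r' ≠ r := by
        rintro rfl
        rw [rootMultiplicity_eq_zero hhr] at hodd
        simp [Nat.odd_iff] at hodd
      refine ⟨r', hr', ?_⟩
      have hne : ((X : Polynomial ℝ) - C r) ^ m * h ≠ 0 := by rw [hfact]; exact hg
      have hmul : g.rootMultiplicity r' =
          ((X - C r) ^ m).rootMultiplicity r' + h.rootMultiplicity r' := by
        conv_lhs => rw [← hfact]
        exact rootMultiplicity_mul hne
      have hz : (((X : Polynomial ℝ) - C r) ^ m).rootMultiplicity r' = 0 := by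
        apply rootMultiplicity_eq_zero
        simp only [IsRoot, eval_pow, eval_sub, eval_X, eval_C]
        exact pow_ne_zero m (sub_ne_zero.mpr hrr)
      rw [hmul, hz, zero_add]
      exact hodd
    · exact ⟨r, hrI, hm ▸ hmo⟩

private lemma pos_integral_aux (a b : ℝ) (hab : a < b) (g : Polynomial ℝ)
    (x0 : ℝ) (hx0 : x0 ∈ Set.Ioo a b) (hpos : 0 < g.eval x0)
    (heven : ∀ x ∈ Set.Ioo a b, ¬ Odd (g.rootMultiplicity x)) :
    0 < ∫ x in a..b, g.eval x := by
  have hg : g ≠ 0 := by rintro rfl; simp at hpos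
  have hnonnegIoo : ∀ x ∈ Set.Ioo a b, 0 ≤ g.eval x := by
    intro x hx
    by_contra hlt
    push_neg at hlt
    rcases lt_trichotomy x x0 with h | h | h
    · obtain ⟨r, hr, ho⟩ := odd_root_aux g.natDegree g le_rfl x x0 h (by nlinarith)
      exact heven r ⟨hx.1.trans hr.1, hr.2.trans hx0.2⟩ ho
    · rw [h] at hlt; linarith
    · obtain ⟨r, hr, ho⟩ := odd_root_aux g.natDegree g le_rfl x0 x h (by nlinarith)
      exact heven r ⟨hx0.1.trans hr.1, hr.2.trans hx.2⟩ ho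
  have hnonnegIcc : ∀ x ∈ Set.Icc a b, 0 ≤ g.eval x := by
    have hmt : Set.MapsTo (fun x => g.eval x) (Set.Ioo a b) (Set.Ici 0) := hnonnegIoo
    have := hmt.closure g.continuous
    rw [closure_Ioo hab.ne, IsClosed.closure_eq isClosed_Ici] at this
    exact this
  have hfi : IntervalIntegrable (fun x => g.eval x) MeasureTheory.volume a b :=
    g.continuous.intervalIntegrable a b
  rw [intervalIntegral.integral_pos_iff_support_of_nonneg_ae' ?_ hfi]
  · refine ⟨hab, ?_⟩
    have hroots : MeasureTheory.volume {x : ℝ | g.IsRoot x} = 0 :=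
      (Polynomial.finite_setOf_isRoot hg).measure_zero _
    have hsub : Set.Ioc a b \ {x : ℝ | g.IsRoot x} ⊆
        Function.support (fun x => g.eval x) ∩ Set.Ioc a b := by
      rintro x ⟨hx, hnr⟩
      exact ⟨hnr, hx⟩
    have hvol : MeasureTheory.volume (Set.Ioc a b \ {x : ℝ | g.IsRoot x}) =
        MeasureTheory.volume (Set.Ioc a b) := MeasureTheory.measure_diff_null hroots
    have hpos' : (0 : ENNReal) < MeasureTheory.volume (Set.Ioc a b) := by
      rw [Real.volume_Ioc]
      simp [hab]
    calc (0 : ENNReal) < MeasureTheory.volume (Set.Ioc a b \ {x : ℝ | g.IsRoot x}) := by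
          rw [hvol]; exact hpos'
      _ ≤ _ := MeasureTheory.measure_mono hsub
  · rw [Set.uIoc_of_le hab.le]
    apply MeasureTheory.ae_restrict_of_forall_mem measurableSet_Ioc
    intro x hx
    exact hnonnegIcc x ⟨hx.1.le, hx.2⟩

/-- A nonzero real polynomial satisfying `∫_a^b P(x) x^k dx = 0` for `k = 0, …, n−1` has at
least `n` distinct roots of odd multiplicity in the open interval `(a, b)`. -/
theorem stmt_14 (a b : ℝ) (hab : a < b) (n : ℕ) (hn : 1 ≤ n)
    (P : Polynomial ℝ) (hP : P ≠ 0)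
    (horth : ∀ k : ℕ, k < n → ∫ x in a..b, P.eval x * x ^ k = 0) :
    ∃ S : Finset ℝ, n ≤ S.card ∧
      ∀ x ∈ S, x ∈ Set.Ioo a b ∧ Odd (P.rootMultiplicity x) := by
  classical
  set S := P.roots.toFinset.filter
    (fun x => x ∈ Set.Ioo a b ∧ Odd (P.rootMultiplicity x)) with hSdef
  refine ⟨S, ?_, ?_⟩
  swap
  · intro x hx
    exact (Finset.mem_filter.mp hx).2
  by_contra hcard
  push_neg at hcard
  -- hcard : S.card < n
  set Q := ∏ x ∈ S, (X - C x) with hQdef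
  have hQmonic : Q.Monic := monic_prod_of_monic _ _ fun i _ => monic_X_sub_C i
  have hQ0 : Q ≠ 0 := hQmonic.ne_zero
  have hdegQ : Q.natDegree = S.card := by
    rw [hQdef, natDegree_prod _ _ fun i _ => X_sub_C_ne_zero i]
    simp [natDegree_X_sub_C]
  have hPQ : P * Q ≠ 0 := mul_ne_zero hP hQ0
  -- the integral of (P*Q).eval vanishes
  have hint : ∫ x in a..b, (P * Q).eval x = 0 := by
    have hev : ∀ x : ℝ, (P * Q).eval x =
        ∑ k ∈ Finset.range (S.card + 1), Q.coeff k * (P.eval x * x ^ k) := by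
      intro x
      rw [eval_mul, eval_eq_sum_range' (p := Q) (n := S.card + 1)
        (by rw [hdegQ]; exact lt_add_one _) x, Finset.mul_sum]
      exact Finset.sum_congr rfl fun k _ => by ring
    simp_rw [hev]
    rw [intervalIntegral.integral_finset_sum]
    · apply Finset.sum_eq_zero
      intro k hk
      have hkn : k < n := by
        have := Finset.mem_range.mp hk
        omega
      rw [intervalIntegral.integral_const_mul, horth k hkn, mul_zero]
    · intro k _
      exact (continuous_const.mul (P.continuous.mul (continuous_pow k))).intervalIntegrable a b
  -- all roots of P*Q in (a,b) have even multiplicity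
  have heven : ∀ x ∈ Set.Ioo a b, ¬ Odd ((P * Q).rootMultiplicity x) := by
    intro x hx hodd
    rw [rootMultiplicity_mul hPQ] at hodd
    have hQmult : Q.rootMultiplicity x = if x ∈ S then 1 else 0 := by
      rw [← count_roots, hQdef, roots_prod_X_sub_C]
      by_cases hxS : x ∈ S
      · rw [if_pos hxS, Multiset.count_eq_one_of_mem S.nodup hxS]
      · rw [if_neg hxS, Multiset.count_eq_zero_of_notMem hxS]
    by_cases hxS : x ∈ S
    · have hPodd : Odd (P.rootMultiplicity x) :=
        ((Finset.mem_filter.mp hxS).2).2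
      rw [hQmult, if_pos hxS] at hodd
      rw [Nat.odd_iff] at hodd hPodd
      omega
    · have hPev : ¬ Odd (P.rootMultiplicity x) := by
        intro hPO
        apply hxS
        rw [hSdef]
        refine Finset.mem_filter.mpr ⟨?_, hx, hPO⟩
        rw [Multiset.mem_toFinset, mem_roots hP]
        have : 0 < P.rootMultiplicity x := by
          rcases hPO with ⟨j, hj⟩; omega
        exact (rootMultiplicity_pos hP).mp this
      rw [hQmult, if_neg hxS, add_zero] at hodd
      exact hPev hodd
  -- find a point where P*Q is nonzero
  have hne : ((Set.Ioo a b) \ {x : ℝ | (P * Q).IsRoot x}).Nonempty :=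
    ((Set.Ioo_infinite hab).diff (Polynomial.finite_setOf_isRoot hPQ)).nonempty
  obtain ⟨x0, hx0I, hx0r⟩ := hne
  have hx0 : (P * Q).eval x0 ≠ 0 := hx0r
  rcases lt_or_gt_of_ne hx0 with hneg | hposv
  · -- apply the positivity lemma to -(P*Q)
    have hevenN : ∀ x ∈ Set.Ioo a b, ¬ Odd ((-(P * Q)).rootMultiplicity x) := by
      intro x hx
      have : (-(P * Q)).rootMultiplicity x = (P * Q).rootMultiplicity x := by
        rw [← count_roots, ← count_roots, roots_neg]
      rw [this]
      exact heven x hx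
    have hposN : 0 < (-(P * Q)).eval x0 := by
      rw [eval_neg]; linarith
    have := pos_integral_aux a b hab (-(P * Q)) x0 hx0I hposN hevenN
    have hintN : ∫ x in a..b, (-(P * Q)).eval x = 0 := by
      simp_rw [eval_neg]
      rw [intervalIntegral.integral_neg, hint, neg_zero]
    rw [hintN] at this
    exact lt_irrefl 0 this
  · have := pos_integral_aux a b hab (P * Q) x0 hx0I hposv heven
    rw [hint] at this
    exact lt_irrefl 0 this
end
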